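/- arXiv:1105.3234 — 6 statements merged into one kernel-verified Lean document; each statement's English description precedes it below -/
import Mathlib

section
/- Let (G,γ) be a Z²-colored graph and suppose that G is a (2,2)-graph. Then (G,γ) is a Ross graph if and only if, for any Laman basis L of G, the fundamental Laman circuit with respect to L of every edge e ∈ E(G)−E(L) has non-trivial Z²-image. -/
/-- A finite directed multigraph: each edge has a tail and a head vertex. -/
structure Multigraph (V : Type) (E : Type) where
  tail : E → V
  head : E → V

namespace Multigraph

variable {V E Γ : Type}

/-- The starting vertex of a step `(e, b)`: the edge `e` traversed forwards if `b = true`,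
backwards otherwise. -/
def stepSrc (G : Multigraph V E) (s : E × Bool) : V :=
  if s.2 then G.tail s.1 else G.head s.1

/-- The ending vertex of a step `(e, b)`. -/
def stepDst (G : Multigraph V E) (s : E × Bool) : V :=
  if s.2 then G.head s.1 else G.tail s.1

/-- `G.WalkFrom u v w`: the list of steps `w` is a walk from `u` to `v`
(edge orientations ignored: each step records an edge and a traversal direction). -/
inductive WalkFrom (G : Multigraph V E) : V → V → List (E × Bool) → Prop
  | nil (v : V) : WalkFrom G v v []
  | cons {v : V} (s : E × Bool) {rest : List (E × Bool)} :
      WalkFrom G (G.stepDst s) v rest → WalkFrom G (G.stepSrc s) v (s :: rest)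

/-- `ρ` of a walk: the sum of the colors of forward-traversed edges minus
the sum of the colors of backward-traversed edges. -/
def rho [AddCommGroup Γ] (γ : E → Γ) (w : List (E × Bool)) : Γ :=
  (w.map fun s => if s.2 then γ s.1 else -γ s.1).sum

/-- A cycle contained in the subgraph with edge set `S`: a nonempty closed walk,
with no repeated edges and no repeated vertices. -/
def IsCycleIn (G : Multigraph V E) (S : Finset E) (w : List (E × Bool)) : Prop :=
  (∃ v, G.WalkFrom v v w) ∧ w ≠ [] ∧ (∀ s ∈ w, s.1 ∈ S) ∧
    (w.map Prod.fst).Nodup ∧ (w.map G.stepSrc).Nodup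

/-- The subgraph with edge set `S` has trivial `Γ`-image: `ρ(C) = 0` for every
cycle `C` contained in it. -/
def TrivialImage [AddCommGroup Γ] (G : Multigraph V E) (γ : E → Γ) (S : Finset E) : Prop :=
  ∀ w, G.IsCycleIn S w → rho γ w = 0

/-- The vertices spanned by an edge set. -/
def verts [DecidableEq V] (G : Multigraph V E) (S : Finset E) : Finset V :=
  S.image G.tail ∪ S.image G.head

/-- The edge set `S` is `(k, ℓ)`-sparse: every nonempty subgraph with `n'` vertices and
`m'` edges satisfies `m' ≤ k n' - ℓ`. -/
def Sparse [DecidableEq V] (G : Multigraph V E) (k ℓ : ℤ) (S : Finset E) : Prop :=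
  ∀ S' ⊆ S, S'.Nonempty → (S'.card : ℤ) ≤ k * ((G.verts S').card : ℤ) - ℓ

/-- The edge set `S` is a `(k, ℓ)`-graph (as a subgraph on its spanned vertices):
it is `(k, ℓ)`-sparse and has exactly `k n - ℓ` edges. -/
def Tight [DecidableEq V] (G : Multigraph V E) (k ℓ : ℤ) (S : Finset E) : Prop :=
  G.Sparse k ℓ S ∧ (S.card : ℤ) = k * ((G.verts S).card : ℤ) - ℓ

/-- The edge set `S` is a `(k, ℓ)`-circuit: edge-minimal not `(k, ℓ)`-sparse. -/
def Circuit [DecidableEq V] [DecidableEq E] (G : Multigraph V E) (k ℓ : ℤ) (S : Finset E) :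
    Prop :=
  ¬ G.Sparse k ℓ S ∧ ∀ e ∈ S, G.Sparse k ℓ (S.erase e)

/-- A `(k, ℓ)`-basis of `G`: a maximal `(k, ℓ)`-sparse edge set. -/
def Basis [DecidableEq V] (G : Multigraph V E) (k ℓ : ℤ) (L : Finset E) : Prop :=
  G.Sparse k ℓ L ∧ ∀ L', L ⊆ L' → G.Sparse k ℓ L' → L' = L

/-- `C` is the fundamental `(k, ℓ)`-circuit of some edge `e ∉ L` with respect to the
`(k, ℓ)`-basis `L`: a `(k, ℓ)`-circuit contained in `L + e`. -/
def FundCircuit [DecidableEq V] [DecidableEq E] (G : Multigraph V E) (k ℓ : ℤ)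
    (L C : Finset E) : Prop :=
  G.Circuit k ℓ C ∧ ∃ e, e ∉ L ∧ C ⊆ insert e L

/-- The whole graph `G` is a `(k, ℓ)`-graph: `(k, ℓ)`-sparse, with exactly
`k n - ℓ` edges where `n` is the number of vertices of `G`. -/
def IsKLGraph [DecidableEq V] [Fintype V] [Fintype E] (G : Multigraph V E) (k ℓ : ℤ) : Prop :=
  G.Sparse k ℓ Finset.univ ∧ (Fintype.card E : ℤ) = k * (Fintype.card V : ℤ) - ℓ

/-- The colored subgraph with edge set `S` is Ross-sparse: nonempty subgraphs with trivial
`Γ`-image satisfy `m' ≤ 2n' - 3`, and those with non-trivial image satisfy `m' ≤ 2n' - 2`. -/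
def RossSparseOn [DecidableEq V] [AddCommGroup Γ] (G : Multigraph V E) (γ : E → Γ)
    (S : Finset E) : Prop :=
  ∀ S' ⊆ S, S'.Nonempty →
    (G.TrivialImage γ S' → (S'.card : ℤ) ≤ 2 * ((G.verts S').card : ℤ) - 3) ∧
    (¬ G.TrivialImage γ S' → (S'.card : ℤ) ≤ 2 * ((G.verts S').card : ℤ) - 2)

/-- The colored subgraph with edge set `S` is a Ross graph (on its spanned vertices):
Ross-sparse with exactly `2n - 2` edges. -/
def RossGraphOn [DecidableEq V] [AddCommGroup Γ] (G : Multigraph V E) (γ : E → Γ)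
    (S : Finset E) : Prop :=
  G.RossSparseOn γ S ∧ (S.card : ℤ) = 2 * ((G.verts S).card : ℤ) - 2

/-- The whole colored graph `(G, γ)` is a Ross graph: Ross-sparse with exactly `2n - 2`
edges, `n` being the number of vertices of `G`. -/
def RossGraph [DecidableEq V] [Fintype V] [Fintype E] [AddCommGroup Γ] (G : Multigraph V E)
    (γ : E → Γ) : Prop :=
  G.RossSparseOn γ Finset.univ ∧ (Fintype.card E : ℤ) = 2 * (Fintype.card V : ℤ) - 2

/-- The colored graph `(G, γ)` is cone-Laman-sparse: nonempty subgraphs with trivial image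
satisfy `m' ≤ 2n' - 3`, those with non-trivial image satisfy `m' ≤ 2n' - 1`. -/
def ConeLamanSparse [DecidableEq V] [AddCommGroup Γ] (G : Multigraph V E) (γ : E → Γ) : Prop :=
  ∀ S' : Finset E, S'.Nonempty →
    (G.TrivialImage γ S' → (S'.card : ℤ) ≤ 2 * ((G.verts S').card : ℤ) - 3) ∧
    (¬ G.TrivialImage γ S' → (S'.card : ℤ) ≤ 2 * ((G.verts S').card : ℤ) - 1)

/-- The whole colored graph `(G, γ)` is a cone-Laman graph: cone-Laman-sparse with exactly
`2n - 1` edges, `n` being the number of vertices of `G`. -/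
def ConeLamanGraph [DecidableEq V] [Fintype V] [Fintype E] [AddCommGroup Γ]
    (G : Multigraph V E) (γ : E → Γ) : Prop :=
  G.ConeLamanSparse γ ∧ (Fintype.card E : ℤ) = 2 * (Fintype.card V : ℤ) - 1

/-- A (simple) path from `u` to `v` using only edges in `S`: a walk visiting no vertex
twice. -/
def IsPathIn (G : Multigraph V E) (S : Finset E) (u v : V) (w : List (E × Bool)) : Prop :=
  G.WalkFrom u v w ∧ (∀ s ∈ w, s.1 ∈ S) ∧ (u :: w.map G.stepDst).Nodup

/-- `G` is connected. -/
def Connected (G : Multigraph V E) : Prop :=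
  ∀ u v : V, ∃ w : List (E × Bool), G.WalkFrom u v w

/-- `T` is a spanning tree of `G`: every pair of vertices is joined by a path in `T`,
and `T` contains no cycle. -/
def IsSpanningTree (G : Multigraph V E) (T : Finset E) : Prop :=
  (∀ u v : V, ∃ w, G.IsPathIn T u v w) ∧ ∀ w, ¬ G.IsCycleIn T w

/-- `T` is a spanning forest of `G`: a maximal acyclic edge set. -/
def IsSpanningForest (G : Multigraph V E) (T : Finset E) : Prop :=
  (∀ w, ¬ G.IsCycleIn T w) ∧
    ∀ T', T ⊆ T' → (∀ w, ¬ G.IsCycleIn T' w) → T' = T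

/-- In the tree `T` rooted at `r`, vertex `x` lies on the (unique) path from the root `r`
to `y`; i.e. `x` is an ancestor of `y`. -/
def Anc (G : Multigraph V E) (T : Finset E) (r x y : V) : Prop :=
  ∀ w, G.IsPathIn T r y w → x ∈ (r :: w.map G.stepDst)

/-- `a` is the least common ancestor of `i` and `j` in the tree `T` rooted at `r`:
the vertex where the paths from `i` to `r` and from `j` to `r` first converge. -/
def IsLCA (G : Multigraph V E) (T : Finset E) (r a i j : V) : Prop :=
  G.Anc T r a i ∧ G.Anc T r a j ∧ ∀ x, G.Anc T r x i → G.Anc T r x j → G.Anc T r x a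

/-- The development of a `ℤ/3ℤ`-colored graph: vertices `i_z`, and for each edge `ij`
with color `γ_ij` the three edges `i_z j_{z + γ_ij}`. -/
def Development (G : Multigraph V E) (γ : E → ZMod 3) :
    Multigraph (V × ZMod 3) (E × ZMod 3) where
  tail s := (G.tail s.1, s.2)
  head s := (G.head s.1, s.2 + γ s.1)

/-- The lift `π⁻¹(S)` in the development of the subgraph with edge set `S`. -/
def lift [DecidableEq E] (S : Finset E) : Finset (E × ZMod 3) :=
  S ×ˢ (Finset.univ : Finset (ZMod 3))

/-- The map `α_z : i_w ↦ i_{w+z}` on the vertices of the development. -/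
def devShift (z : ZMod 3) : V × ZMod 3 → V × ZMod 3 :=
  fun p => (p.1, p.2 + z)

/-- The map `α_z` on the edges of the development. -/
def devShiftE (z : ZMod 3) : E × ZMod 3 → E × ZMod 3 :=
  fun s => (s.1, s.2 + z)

/-- Two vertices of a multigraph are adjacent if some edge joins them (in either
direction). -/
def Adj (G : Multigraph V E) (u v : V) : Prop :=
  ∃ e, (G.tail e = u ∧ G.head e = v) ∨ (G.tail e = v ∧ G.head e = u)

end Multigraph

section Helpers

variable {V E Γ : Type} [DecidableEq V] [DecidableEq E] [AddCommGroup Γ]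

lemma trivialImage_mono (G : Multigraph V E) (γ : E → Γ) {S T : Finset E} (h : S ⊆ T)
    (hT : G.TrivialImage γ T) : G.TrivialImage γ S := by
  intro w hw
  obtain ⟨h1, h2, h3, h4, h5⟩ := hw
  exact hT w ⟨h1, h2, fun s hs => h (h3 s hs), h4, h5⟩

lemma sparse_mono (G : Multigraph V E) {k ℓ : ℤ} {S T : Finset E} (h : S ⊆ T)
    (hT : G.Sparse k ℓ T) : G.Sparse k ℓ S :=
  fun S' hS' => hT S' (hS'.trans h)

lemma exists_circuit_of_not_sparse (G : Multigraph V E) {k ℓ : ℤ} {S : Finset E}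
    (h : ¬ G.Sparse k ℓ S) : ∃ C, C ⊆ S ∧ C.Nonempty ∧ G.Circuit k ℓ C := by
  classical
  rw [Multigraph.Sparse] at h
  push_neg at h
  obtain ⟨T, hTS, hTne, hT⟩ := h
  set F := S.powerset.filter
    (fun T' => T'.Nonempty ∧ k * ((G.verts T').card : ℤ) - ℓ < (T'.card : ℤ)) with hF
  have hTF : T ∈ F := by
    simp only [hF, Finset.mem_filter, Finset.mem_powerset]
    exact ⟨hTS, hTne, hT⟩
  obtain ⟨C, hCF, hmin⟩ := F.exists_min_image Finset.card ⟨T, hTF⟩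
  simp only [hF, Finset.mem_filter, Finset.mem_powerset] at hCF
  obtain ⟨hCS, hCne, hCv⟩ := hCF
  refine ⟨C, hCS, hCne, ?_, ?_⟩
  · intro hs
    exact absurd (hs C (le_refl C) hCne) (not_le.mpr hCv)
  · intro e he T' hT' hT'ne
    by_contra hlt
    push_neg at hlt
    have hT'F : T' ∈ F := by
      simp only [hF, Finset.mem_filter, Finset.mem_powerset]
      exact ⟨(hT'.trans (Finset.erase_subset e C)).trans hCS, hT'ne, hlt⟩
    have h1 : C.card ≤ T'.card := hmin T' hT'F
    have h2 : T'.card ≤ (C.erase e).card := Finset.card_le_card hT'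
    have h3 : (C.erase e).card = C.card - 1 := Finset.card_erase_of_mem he
    have h4 : 1 ≤ C.card := Finset.card_pos.mpr ⟨e, he⟩
    omega

lemma exists_basis_extending [Fintype E] (G : Multigraph V E) {k ℓ : ℤ} {L0 : Finset E}
    (h : G.Sparse k ℓ L0) : ∃ L, L0 ⊆ L ∧ G.Basis k ℓ L := by
  classical
  set F := (Finset.univ : Finset E).powerset.filter
    (fun L' => L0 ⊆ L' ∧ G.Sparse k ℓ L') with hF
  have hL0F : L0 ∈ F := by
    simp only [hF, Finset.mem_filter, Finset.mem_powerset]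
    exact ⟨Finset.subset_univ _, le_refl L0, h⟩
  obtain ⟨L, hLF, hmax⟩ := F.exists_max_image Finset.card ⟨L0, hL0F⟩
  simp only [hF, Finset.mem_filter, Finset.mem_powerset] at hLF
  obtain ⟨-, hL0L, hLs⟩ := hLF
  refine ⟨L, hL0L, hLs, ?_⟩
  intro L' hLL' hL's
  have hL'F : L' ∈ F := by
    simp only [hF, Finset.mem_filter, Finset.mem_powerset]
    exact ⟨Finset.subset_univ _, hL0L.trans hLL', hL's⟩
  exact (Finset.eq_of_subset_of_card_le hLL' (hmax L' hL'F)).symm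

end Helpers

/-- a `ℤ²`-colored `(2,2)`-graph is Ross iff for any Laman basis `L`, the
fundamental Laman circuit of every edge `e ∉ L` has non-trivial `ℤ²`-image. -/
theorem ross_iff_fundamental_laman_circuits_nontrivial
    {V E : Type} [Fintype V] [Fintype E] [DecidableEq V] [DecidableEq E]
    (G : Multigraph V E) (γ : E → ℤ × ℤ) (h22 : G.IsKLGraph 2 2) :
    G.RossGraph γ ↔
      ∀ L : Finset E, G.Basis 2 3 L → ∀ e ∉ L, ∀ C : Finset E,
        G.Circuit 2 3 C → C ⊆ insert e L → ¬ G.TrivialImage γ C := by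
  classical
  constructor
  · rintro ⟨hRS, -⟩ L hL e heL C hC hCL hTriv
    obtain ⟨hns, -⟩ := hC
    rw [Multigraph.Sparse] at hns
    push_neg at hns
    obtain ⟨T, hTC, hTne, hT⟩ := hns
    have h1 := (hRS T (Finset.subset_univ T) hTne).1 (trivialImage_mono G γ hTC hTriv)
    omega
  · intro h
    refine ⟨?_, h22.2⟩
    intro S' _ hne
    constructor
    · intro hTriv
      by_contra hgt
      push_neg at hgt
      have hns : ¬ G.Sparse 2 3 S' := fun hs =>
        absurd (hs S' (le_refl S') hne) (not_le.mpr hgt)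
      obtain ⟨C, hCS, hCne, hC⟩ := exists_circuit_of_not_sparse G hns
      obtain ⟨e, he⟩ := hCne
      have hCes : G.Sparse 2 3 (C.erase e) := hC.2 e he
      obtain ⟨L, hCeL, hLB⟩ := exists_basis_extending G hCes
      have heL : e ∉ L := by
        intro heL
        have hCL : C ⊆ L := by
          intro x hx
          rcases eq_or_ne x e with rfl | hxe
          · exact heL
          · exact hCeL (Finset.mem_erase.mpr ⟨hxe, hx⟩)
        exact hC.1 (sparse_mono G hCL hLB.1)
      have hCiL : C ⊆ insert e L := by
        intro x hx
        rcases eq_or_ne x e with rfl | hxe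
        · exact Finset.mem_insert_self x L
        · exact Finset.mem_insert_of_mem (hCeL (Finset.mem_erase.mpr ⟨hxe, hx⟩))
      exact h L hLB e heL C hC hCiL (trivialImage_mono G γ hCS hTriv)
    · intro _
      exact h22.1 S' (Finset.subset_univ S') hne
end

section
/- Let G be a graph and suppose that all subgraphs of G that are Laman circuits are pairwise edge-disjoint. Then all Laman bases of G have the same fundamental Laman circuits, and every Laman circuit in G is a fundamental Laman circuit with respect to any Laman basis of G. -/
/-!
A circuit `C` cannot lie inside a basis `L`, so it has an edge `f ∉ L`. Any other edge
`g ∈ C` outside `L` would lie in a circuit `C' ⊆ L + g`; then `C' ≠ C` because `f ∉ C'`,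
yet both contain `g`, contradicting edge-disjointness. Hence `C ⊆ L + f`.
-/

namespace Multigraph

variable {V E : Type} [DecidableEq V] {G : Multigraph V E} {k ℓ : ℤ}

theorem Sparse.mono {S S' : Finset E} (hS : G.Sparse k ℓ S) (hsub : S' ⊆ S) :
    G.Sparse k ℓ S' :=
  fun T hT => hS T (hT.trans hsub)

variable [DecidableEq E]

theorem Basis.not_sparse_insert {L : Finset E} (hL : G.Basis k ℓ L) {g : E} (hg : g ∉ L) :
    ¬ G.Sparse k ℓ (insert g L) := fun hs =>
  hg (hL.2 _ (Finset.subset_insert g L) hs ▸ Finset.mem_insert_self g L)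

theorem Circuit.not_subset_of_sparse {C S : Finset E} (hC : G.Circuit k ℓ C)
    (hS : G.Sparse k ℓ S) : ¬ C ⊆ S :=
  fun hsub => hC.1 (hS.mono hsub)

theorem exists_circuit_subset_of_not_sparse {S : Finset E} (hS : ¬ G.Sparse k ℓ S) :
    ∃ C ⊆ S, G.Circuit k ℓ C := by
  induction S using Finset.strongInduction with
  | _ S ih =>
    by_cases hmin : ∀ e ∈ S, G.Sparse k ℓ (S.erase e)
    · exact ⟨S, subset_rfl, hS, hmin⟩
    · obtain ⟨e, he, hne⟩ := not_forall₂.mp hmin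
      obtain ⟨C, hCsub, hC⟩ := ih (S.erase e) (Finset.erase_ssubset he) hne
      exact ⟨C, hCsub.trans (Finset.erase_subset e S), hC⟩

theorem Basis.exists_circuit_mem_subset_insert {L : Finset E} (hL : G.Basis k ℓ L) {g : E}
    (hg : g ∉ L) : ∃ C ⊆ insert g L, G.Circuit k ℓ C ∧ g ∈ C := by
  obtain ⟨C, hCsub, hC⟩ := exists_circuit_subset_of_not_sparse (hL.not_sparse_insert hg)
  refine ⟨C, hCsub, hC, ?_⟩
  by_contra hgC
  exact hC.not_subset_of_sparse hL.1 ((Finset.subset_insert_iff_of_notMem hgC).mp hCsub)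

theorem Basis.fundCircuit_of_circuit
    (hdisj : {C : Finset E | G.Circuit k ℓ C}.Pairwise Disjoint) {L C : Finset E}
    (hL : G.Basis k ℓ L) (hC : G.Circuit k ℓ C) : G.FundCircuit k ℓ L C := by
  obtain ⟨f, hfC, hfL⟩ := Finset.not_subset.mp (hC.not_subset_of_sparse hL.1)
  refine ⟨hC, f, hfL, fun g hgC => ?_⟩
  by_contra hg
  simp only [Finset.mem_insert, not_or] at hg
  obtain ⟨hgf, hgL⟩ := hg
  obtain ⟨C', hC'sub, hC', hgC'⟩ := hL.exists_circuit_mem_subset_insert hgL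
  have hCC' : C = C' :=
    hdisj.eq hC hC' (Finset.not_disjoint_iff.mpr ⟨g, hgC, hgC'⟩)
  rcases Finset.mem_insert.mp (hC'sub (hCC' ▸ hfC)) with hfg | hfL'
  · exact hgf hfg.symm
  · exact hfL hfL'

end Multigraph

theorem laman_circuits_disjoint_fundamental_general
    {V E : Type} [DecidableEq V] [DecidableEq E]
    (G : Multigraph V E)
    (h : ∀ C₁ C₂ : Finset E, G.Circuit 2 3 C₁ → G.Circuit 2 3 C₂ → C₁ ≠ C₂ →
      Disjoint C₁ C₂) :
    (∀ L₁ L₂ : Finset E, G.Basis 2 3 L₁ → G.Basis 2 3 L₂ →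
      ∀ C : Finset E, (G.FundCircuit 2 3 L₁ C ↔ G.FundCircuit 2 3 L₂ C)) ∧
    (∀ L : Finset E, G.Basis 2 3 L → ∀ C : Finset E, G.Circuit 2 3 C →
      G.FundCircuit 2 3 L C) := by
  have hdisj : {C : Finset E | G.Circuit 2 3 C}.Pairwise Disjoint :=
    fun C₁ h₁ C₂ h₂ hne => h C₁ C₂ h₁ h₂ hne
  have hfund : ∀ L : Finset E, G.Basis 2 3 L → ∀ C : Finset E, G.Circuit 2 3 C →
      G.FundCircuit 2 3 L C :=
    fun L hL C hC => hL.fundCircuit_of_circuit hdisj hC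
  exact ⟨fun L₁ L₂ hL₁ hL₂ C =>
    ⟨fun hF => hfund L₂ hL₂ C hF.1, fun hF => hfund L₁ hL₁ C hF.1⟩, hfund⟩

/-- if all Laman circuits in `G` are pairwise edge-disjoint, then all Laman
bases of `G` have the same fundamental Laman circuits, and every Laman circuit in `G` is a
fundamental Laman circuit with respect to any Laman basis. -/
theorem laman_circuits_disjoint_fundamental
    {V E : Type} [Fintype V] [Fintype E] [DecidableEq V] [DecidableEq E]
    (G : Multigraph V E)
    (h : ∀ C₁ C₂ : Finset E, G.Circuit 2 3 C₁ → G.Circuit 2 3 C₂ → C₁ ≠ C₂ →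
      Disjoint C₁ C₂) :
    (∀ L₁ L₂ : Finset E, G.Basis 2 3 L₁ → G.Basis 2 3 L₂ →
      ∀ C : Finset E, (G.FundCircuit 2 3 L₁ C ↔ G.FundCircuit 2 3 L₂ C)) ∧
    (∀ L : Finset E, G.Basis 2 3 L → ∀ C : Finset E, G.Circuit 2 3 C →
      G.FundCircuit 2 3 L C) :=
  laman_circuits_disjoint_fundamental_general G h
end

section
/- If G is a (2,2)-graph, then any two distinct subgraphs of G that are Laman circuits are edge-disjoint. -/
namespace Multigraph

lemma verts_mono' {V E : Type} [DecidableEq V] (G : Multigraph V E) {S T : Finset E}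
    (h : S ⊆ T) : G.verts S ⊆ G.verts T :=
  Finset.union_subset_union (Finset.image_subset_image h) (Finset.image_subset_image h)

lemma verts_union' {V E : Type} [DecidableEq V] [DecidableEq E] (G : Multigraph V E)
    (S T : Finset E) : G.verts (S ∪ T) = G.verts S ∪ G.verts T := by
  simp only [verts, Finset.image_union]
  ac_rfl

lemma sparse_anti {V E : Type} [DecidableEq V] (G : Multigraph V E) {k ℓ : ℤ}
    {S T : Finset E} (hT : G.Sparse k ℓ T) (h : S ⊆ T) : G.Sparse k ℓ S :=
  fun S' hs hn => hT S' (hs.trans h) hn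

/-- A `(2,3)`-circuit in a `(2,2)`-sparse graph is nonempty and has exactly
`2n - 2` edges. -/
lemma circuit_card {V E : Type} [DecidableEq V] [DecidableEq E] (G : Multigraph V E)
    {C : Finset E} (hC : G.Circuit 2 3 C) (hsp : G.Sparse 2 2 C) :
    C.Nonempty ∧ (C.card : ℤ) = 2 * ((G.verts C).card : ℤ) - 2 := by
  obtain ⟨hns, hmin⟩ := hC
  rw [Sparse] at hns
  push_neg at hns
  obtain ⟨S', hsub, hne, hgt⟩ := hns
  have hSC : S' = C := by
    by_contra h'
    obtain ⟨e, heC, heS⟩ := Finset.exists_of_ssubset ⟨hsub, fun h => h' (hsub.antisymm h)⟩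
    have := hmin e heC S' (fun x hx => Finset.mem_erase.2 ⟨fun h => heS (h ▸ hx), hsub hx⟩) hne
    omega
  subst hSC
  have hle := hsp S' (le_refl _) hne
  exact ⟨hne, by omega⟩

end Multigraph

/-- in a `(2,2)`-graph, distinct Laman circuits are edge-disjoint. -/
theorem laman_circuits_disjoint_in_22_graph
    {V E : Type} [Fintype V] [Fintype E] [DecidableEq V] [DecidableEq E]
    (G : Multigraph V E) (h22 : G.IsKLGraph 2 2)
    (C₁ C₂ : Finset E) (h₁ : G.Circuit 2 3 C₁) (h₂ : G.Circuit 2 3 C₂) (hne : C₁ ≠ C₂) :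
    Disjoint C₁ C₂ := by
  by_contra hdis
  rw [Finset.not_disjoint_iff_nonempty_inter] at hdis
  set D := C₁ ∩ C₂ with hD
  -- D is a proper subset of C₁
  have hnsub : ¬ C₁ ⊆ C₂ := by
    intro hsub
    obtain ⟨e, he₂, he₁⟩ := Finset.exists_of_ssubset ⟨hsub, fun h => hne (hsub.antisymm h)⟩
    exact h₁.1 (G.sparse_anti (h₂.2 e he₂)
      (fun x hx => Finset.mem_erase.2 ⟨fun h => he₁ (h ▸ hx), hsub hx⟩))
  obtain ⟨e, he₁, he₂⟩ := Finset.not_subset.1 hnsub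
  -- D ⊆ C₁.erase e, which is (2,3)-sparse
  have hDsparse := h₁.2 e he₁
  have hDle : (D.card : ℤ) ≤ 2 * ((G.verts D).card : ℤ) - 3 :=
    hDsparse D (fun x hx => Finset.mem_erase.2
      ⟨fun h => he₂ (h ▸ (Finset.mem_inter.1 hx).2), (Finset.mem_inter.1 hx).1⟩) hdis
  -- cards of circuits
  have hsp : G.Sparse 2 2 (Finset.univ : Finset E) := h22.1
  obtain ⟨hne₁, hc₁⟩ := G.circuit_card h₁ (G.sparse_anti hsp (Finset.subset_univ _))
  obtain ⟨hne₂, hc₂⟩ := G.circuit_card h₂ (G.sparse_anti hsp (Finset.subset_univ _))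
  -- card of union
  have hUle : ((C₁ ∪ C₂).card : ℤ) ≤ 2 * ((G.verts (C₁ ∪ C₂)).card : ℤ) - 2 :=
    hsp _ (Finset.subset_univ _) (hne₁.mono Finset.subset_union_left)
  -- inclusion-exclusion on edges
  have hedge : (C₁ ∪ C₂).card + D.card = C₁.card + C₂.card :=
    Finset.card_union_add_card_inter C₁ C₂
  -- verts inequalities
  have hvU : G.verts (C₁ ∪ C₂) = G.verts C₁ ∪ G.verts C₂ := G.verts_union' C₁ C₂
  have hvD : G.verts D ⊆ G.verts C₁ ∩ G.verts C₂ :=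
    Finset.subset_inter (G.verts_mono' Finset.inter_subset_left)
      (G.verts_mono' Finset.inter_subset_right)
  have hv : (G.verts (C₁ ∪ C₂)).card + (G.verts D).card ≤
      (G.verts C₁).card + (G.verts C₂).card := by
    rw [hvU]
    calc (G.verts C₁ ∪ G.verts C₂).card + (G.verts D).card
        ≤ (G.verts C₁ ∪ G.verts C₂).card + (G.verts C₁ ∩ G.verts C₂).card :=
          Nat.add_le_add_left (Finset.card_le_card hvD) _
      _ = (G.verts C₁).card + (G.verts C₂).card :=
          Finset.card_union_add_card_inter _ _
  omega
end

section
/- Let G be a (2,1)-graph. Then any two distinct subgraphs of G that are (2,2)-circuits are edge-disjoint. -/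
lemma Multigraph.verts_mono'_s9 {V E : Type} [DecidableEq V] (G : Multigraph V E)
    {S T : Finset E} (h : S ⊆ T) : G.verts S ⊆ G.verts T :=
  Finset.union_subset_union (Finset.image_subset_image h) (Finset.image_subset_image h)

lemma Multigraph.verts_union'_s9 {V E : Type} [DecidableEq V] [DecidableEq E]
    (G : Multigraph V E) (S T : Finset E) :
    G.verts (S ∪ T) = G.verts S ∪ G.verts T := by
  simp only [Multigraph.verts, Finset.image_union]
  exact Finset.union_union_union_comm _ _ _ _

/-- every proper nonempty subset of a (2,2)-circuit satisfies m ≤ 2n - 2 -/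
lemma Multigraph.circuit22_proper {V E : Type} [DecidableEq V] [DecidableEq E]
    (G : Multigraph V E) {C : Finset E} (hC : G.Circuit 2 2 C)
    {S : Finset E} (hSC : S ⊆ C) (hSne : S ≠ C) (hS : S.Nonempty) :
    (S.card : ℤ) ≤ 2 * ((G.verts S).card : ℤ) - 2 := by
  obtain ⟨e, heC, heS⟩ : ∃ e ∈ C, e ∉ S := by
    by_contra h
    push_neg at h
    exact hSne (Finset.Subset.antisymm hSC h)
  have hsub : S ⊆ C.erase e := fun x hx =>
    Finset.mem_erase.mpr ⟨fun h => heS (h ▸ hx), hSC hx⟩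
  exact hC.2 e heC S hsub hS

/-- a (2,2)-circuit in a (2,1)-sparse graph has exactly 2n - 1 edges -/
lemma Multigraph.circuit22_card {V E : Type} [Fintype V] [Fintype E]
    [DecidableEq V] [DecidableEq E] (G : Multigraph V E)
    (hs : G.Sparse 2 1 Finset.univ) {C : Finset E} (hC : G.Circuit 2 2 C) :
    C.Nonempty ∧ (C.card : ℤ) = 2 * ((G.verts C).card : ℤ) - 1 := by
  have hns := hC.1
  simp only [Multigraph.Sparse, not_forall] at hns
  obtain ⟨S, hSC, hSne, hbig⟩ := hns
  have hSeq : S = C := by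
    by_contra h
    exact hbig (G.circuit22_proper hC hSC h hSne)
  subst hSeq
  refine ⟨hSne, le_antisymm (hs S (Finset.subset_univ S) hSne) ?_⟩
  push_neg at hbig
  omega

/-- in a `(2,1)`-graph, distinct `(2,2)`-circuits are edge-disjoint. -/
theorem circuits22_disjoint_in_21_graph
    {V E : Type} [Fintype V] [Fintype E] [DecidableEq V] [DecidableEq E]
    (G : Multigraph V E) (h21 : G.IsKLGraph 2 1)
    (C₁ C₂ : Finset E) (h₁ : G.Circuit 2 2 C₁) (h₂ : G.Circuit 2 2 C₂) (hne : C₁ ≠ C₂) :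
    Disjoint C₁ C₂ := by
  by_contra hdisj
  rw [Finset.not_disjoint_iff_nonempty_inter] at hdisj
  have hs : G.Sparse 2 1 Finset.univ := h21.1
  obtain ⟨hC₁ne, hC₁card⟩ := G.circuit22_card hs h₁
  obtain ⟨hC₂ne, hC₂card⟩ := G.circuit22_card hs h₂
  -- the intersection is a proper subset of C₁
  have hIP : C₁ ∩ C₂ ≠ C₁ := by
    intro h
    have hsub : C₁ ⊆ C₂ := by
      intro x hx; have := h ▸ hx; exact (Finset.mem_inter.mp (h.symm ▸ hx)).2
    obtain ⟨e, heC₂, heC₁⟩ : ∃ e ∈ C₂, e ∉ C₁ := by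
      by_contra hh; push_neg at hh
      exact hne (Finset.Subset.antisymm hsub hh)
    have hsub' : C₁ ⊆ C₂.erase e := fun x hx =>
      Finset.mem_erase.mpr ⟨fun h' => heC₁ (h' ▸ hx), hsub hx⟩
    exact h₁.1 fun S hS hSne => h₂.2 e heC₂ S (hS.trans hsub') hSne
  have hIcard : ((C₁ ∩ C₂).card : ℤ) ≤ 2 * ((G.verts (C₁ ∩ C₂)).card : ℤ) - 2 :=
    G.circuit22_proper h₁ Finset.inter_subset_left hIP hdisj
  -- union sparsity
  have hUne : (C₁ ∪ C₂).Nonempty := hC₁ne.mono Finset.subset_union_left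
  have hU : ((C₁ ∪ C₂).card : ℤ) ≤ 2 * ((G.verts (C₁ ∪ C₂)).card : ℤ) - 1 :=
    hs _ (Finset.subset_univ _) hUne
  -- vertex counts
  have hvU : G.verts (C₁ ∪ C₂) = G.verts C₁ ∪ G.verts C₂ := G.verts_union'_s9 C₁ C₂
  have hvI : G.verts (C₁ ∩ C₂) ⊆ G.verts C₁ ∩ G.verts C₂ :=
    Finset.subset_inter (G.verts_mono'_s9 Finset.inter_subset_left)
      (G.verts_mono'_s9 Finset.inter_subset_right)
  have hvIcard : (G.verts (C₁ ∩ C₂)).card ≤ (G.verts C₁ ∩ G.verts C₂).card :=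
    Finset.card_le_card hvI
  have hEcount : (C₁ ∪ C₂).card + (C₁ ∩ C₂).card = C₁.card + C₂.card :=
    Finset.card_union_add_card_inter C₁ C₂
  have hVcount : (G.verts C₁ ∪ G.verts C₂).card + (G.verts C₁ ∩ G.verts C₂).card
      = (G.verts C₁).card + (G.verts C₂).card :=
    Finset.card_union_add_card_inter _ _
  rw [hvU] at hU
  omega
end

section
/- Let (G,γ) be a Z/kZ-colored graph with G a (2,1)-graph. Then (G,γ) is a cone-Laman graph if and only if every subgraph of G that is a Laman circuit has non-trivial Z/kZ-image. -/
private lemma trivialImage_subset {V E Γ : Type} [AddCommGroup Γ]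
    (G : Multigraph V E) (γ : E → Γ) {S S' : Finset E} (h : S' ⊆ S)
    (hT : G.TrivialImage γ S) : G.TrivialImage γ S' := by
  intro w hw
  exact hT w ⟨hw.1, hw.2.1, fun s hs => h (hw.2.2.1 s hs), hw.2.2.2⟩

private lemma exists_circuit_subset {V E : Type} [DecidableEq V] [DecidableEq E]
    (G : Multigraph V E) (k ℓ : ℤ) :
    ∀ S : Finset E, ¬ G.Sparse k ℓ S → ∃ C ⊆ S, G.Circuit k ℓ C := by
  intro S
  induction S using Finset.strongInduction with
  | _ S ih =>
    intro hS
    by_cases h : ∀ e ∈ S, G.Sparse k ℓ (S.erase e)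
    · exact ⟨S, subset_rfl, hS, h⟩
    · push_neg at h
      obtain ⟨e, he, hne⟩ := h
      obtain ⟨C, hCs, hC⟩ := ih _ (Finset.erase_ssubset he) hne
      exact ⟨C, hCs.trans (Finset.erase_subset _ _), hC⟩

/-- a `ℤ/kℤ`-colored `(2,1)`-graph is cone-Laman iff every Laman circuit has
non-trivial `ℤ/kℤ`-image. -/
theorem cone_laman_iff_laman_circuits_nontrivial
    {V E : Type} [Fintype V] [Fintype E] [DecidableEq V] [DecidableEq E]
    (k : ℕ) (G : Multigraph V E) (γ : E → ZMod k) (h21 : G.IsKLGraph 2 1) :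
    G.ConeLamanGraph γ ↔ ∀ C : Finset E, G.Circuit 2 3 C → ¬ G.TrivialImage γ C := by
  obtain ⟨hsp, hcard⟩ := h21
  constructor
  · rintro ⟨hCL, -⟩ C hC hT
    obtain ⟨hns, -⟩ := hC
    rw [Multigraph.Sparse] at hns
    push_neg at hns
    obtain ⟨S', hsub, hne, hviol⟩ := hns
    have := (hCL S' hne).1 (trivialImage_subset G γ hsub hT)
    linarith
  · intro hcirc
    refine ⟨?_, hcard⟩
    intro S' hne
    constructor
    · intro hT
      by_contra hlt
      push_neg at hlt
      have hnsp : ¬ G.Sparse 2 3 S' := by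
        intro hs
        exact absurd (hs S' subset_rfl hne) (by linarith)
      obtain ⟨C, hCsub, hC⟩ := exists_circuit_subset G 2 3 S' hnsp
      exact hcirc C hC (trivialImage_subset G γ hCsub hT)
    · intro _
      have := hsp S' (Finset.subset_univ _) hne
      linarith
end

section
/- Let (G,γ) be a Z/3Z-colored graph and let G̃ be its development. If G̃ is Laman-sparse (i.e., (2,3)-sparse), then (G,γ) is cone-Laman-sparse. -/
/-!
A subgraph `S` with trivial image carries a potential `φ : V → Γ` with
`φ (head e) = φ (tail e) + γ e` on its edges: adding the edges one at a time, an edge closing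
a path of `S` closes a cycle, whose trivial `ρ` says that the current potential already fits
the edge, and otherwise the potential can be shifted on the part reachable from its head.
Then `e ↦ (e, φ (tail e))` embeds `S` in the development as a copy with no more vertices,
so Laman-sparsity of the development gives `m' ≤ 2n' - 3`. In general the whole lift of `S`
has `3m'` edges on `3n'` vertices, and `3m' ≤ 6n' - 3` gives `m' ≤ 2n' - 1`.
-/

namespace Multigraph

variable {V E Γ : Type} {G : Multigraph V E}

section Walks

variable {S : Finset E} {u v x : V} {s : E × Bool} {w p : List (E × Bool)}

lemma WalkFrom.append {w' : List (E × Bool)} (h : G.WalkFrom u v w) (h' : G.WalkFrom v x w') :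
    G.WalkFrom u x (w ++ w') := by
  induction h with
  | nil => simpa
  | cons s _ ih => exact .cons s (ih h')

lemma WalkFrom.cons_forward {e : E} (h : G.WalkFrom (G.head e) v w) :
    G.WalkFrom (G.tail e) v ((e, true) :: w) :=
  .cons (e, true) h

lemma WalkFrom.cons_backward {e : E} (h : G.WalkFrom (G.tail e) v w) :
    G.WalkFrom (G.head e) v ((e, false) :: w) :=
  .cons (e, false) h

lemma WalkFrom.of_cons (h : G.WalkFrom u v (s :: w)) :
    u = G.stepSrc s ∧ G.WalkFrom (G.stepDst s) v w := by
  cases h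
  exact ⟨rfl, ‹_›⟩

lemma WalkFrom.map_stepSrc (h : G.WalkFrom u v w) :
    w.map G.stepSrc = (u :: w.map G.stepDst).dropLast := by
  induction h with
  | nil => rfl
  | cons s _ ih => rw [List.map_cons, List.map_cons, List.dropLast_cons_cons, ← ih]

lemma stepSrc_eq_or_eq_stepDst {t : E × Bool} (h : s.1 = t.1) :
    G.stepSrc s = G.stepSrc t ∨ G.stepSrc s = G.stepDst t := by
  obtain ⟨e, b⟩ := s
  obtain ⟨f, c⟩ := t
  obtain rfl : e = f := h
  cases b <;> cases c <;> simp [stepSrc, stepDst]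

lemma IsPathIn.of_cons (h : G.IsPathIn S u v (s :: p)) : G.IsPathIn S (G.stepDst s) v p :=
  ⟨h.1.of_cons.2, fun t ht => h.2.1 t (List.mem_cons_of_mem _ ht),
    by simpa using h.2.2.of_cons⟩

lemma IsPathIn.exists_of_mem {a : V} (h : G.IsPathIn S a v p) (hu : u ∈ a :: p.map G.stepDst) :
    ∃ q, G.IsPathIn S u v q := by
  induction p generalizing a with
  | nil =>
    obtain rfl : u = a := by simpa using hu
    exact ⟨[], h⟩
  | cons s p ih =>
    rcases List.mem_cons.mp hu with rfl | hu
    · exact ⟨_, h⟩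
    · exact ih h.of_cons (by simpa using hu)

lemma IsPathIn.nodup_edges (h : G.IsPathIn S u v p) : (p.map Prod.fst).Nodup := by
  induction p generalizing u with
  | nil => exact List.nodup_nil
  | cons s p ih =>
    obtain ⟨rfl, hw⟩ := h.1.of_cons
    refine List.nodup_cons.mpr ⟨fun hs => ?_, ih h.of_cons⟩
    obtain ⟨t, ht, hts⟩ := List.mem_map.mp hs
    have hfresh : G.stepSrc s ∉ G.stepDst s :: p.map G.stepDst := by
      simpa using (List.nodup_cons.mp h.2.2).1
    -- both ends of the later step `t` are later vertices, and one of them is `stepSrc s`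
    have hsrc : G.stepSrc t ∈ G.stepDst s :: p.map G.stepDst :=
      (List.dropLast_sublist _).subset (hw.map_stepSrc ▸ List.mem_map_of_mem ht)
    have hdst : G.stepDst t ∈ G.stepDst s :: p.map G.stepDst :=
      List.mem_cons_of_mem _ (List.mem_map_of_mem ht)
    rcases stepSrc_eq_or_eq_stepDst hts.symm with heq | heq <;> rw [heq] at hfresh <;>
      contradiction

lemma IsPathIn.isCycleIn_append [DecidableEq E] {e : E} (he : e ∉ S)
    (hp : G.IsPathIn S (G.tail e) (G.head e) p) :
    G.IsCycleIn (insert e S) (p ++ [(e, false)]) := by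
  have hw : G.WalkFrom (G.tail e) (G.tail e) (p ++ [(e, false)]) :=
    hp.1.append (.cons_backward (.nil _))
  refine ⟨⟨_, hw⟩, by simp, ?_, ?_, ?_⟩
  · intro t ht
    rcases List.mem_append.mp ht with ht | ht
    · exact Finset.mem_insert_of_mem (hp.2.1 t ht)
    · obtain rfl := List.mem_singleton.mp ht
      exact Finset.mem_insert_self _ _
  · rw [List.map_append, List.nodup_append]
    refine ⟨hp.nodup_edges, List.nodup_singleton _, ?_⟩
    rintro _ hf _ hf' rfl
    obtain ⟨t, ht, rfl⟩ := List.mem_map.mp hf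
    have hte : t.1 = e := List.mem_singleton.mp hf'
    exact he (hte ▸ hp.2.1 t ht)
  · rw [hw.map_stepSrc, List.map_append, List.map_singleton, ← List.cons_append,
      List.dropLast_concat]
    exact hp.2.2

end Walks

def ReachableIn (G : Multigraph V E) (S : Finset E) (u v : V) : Prop :=
  ∃ w, G.WalkFrom u v w ∧ ∀ s ∈ w, s.1 ∈ S

section Reachability

variable {S : Finset E} {u v : V}

lemma ReachableIn.refl (S : Finset E) (v : V) : G.ReachableIn S v v :=
  ⟨[], .nil v, by simp⟩

lemma reachableIn_tail_iff_reachableIn_head {f : E} (hf : f ∈ S) :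
    G.ReachableIn S (G.tail f) v ↔ G.ReachableIn S (G.head f) v := by
  have cons_mem {b : Bool} {w : List (E × Bool)} (hw : ∀ s ∈ w, s.1 ∈ S) :
      ∀ s ∈ (f, b) :: w, s.1 ∈ S := by
    simpa [hf] using hw
  constructor
  · rintro ⟨w, hw, hS⟩
    exact ⟨_, hw.cons_backward, cons_mem hS⟩
  · rintro ⟨w, hw, hS⟩
    exact ⟨_, hw.cons_forward, cons_mem hS⟩

lemma ReachableIn.exists_isPathIn (h : G.ReachableIn S u v) : ∃ p, G.IsPathIn S u v p := by
  obtain ⟨w, hw, hS⟩ := h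
  induction hw with
  | nil v => exact ⟨[], .nil v, by simp, by simp⟩
  | cons s _ ih =>
    obtain ⟨p, hp⟩ := ih fun t ht => hS t (List.mem_cons_of_mem _ ht)
    by_cases hloop : G.stepSrc s ∈ G.stepDst s :: p.map G.stepDst
    · exact hp.exists_of_mem hloop
    · refine ⟨s :: p, .cons s hp.1, ?_, List.nodup_cons.mpr ⟨hloop, hp.2.2⟩⟩
      intro t ht
      rcases List.mem_cons.mp ht with rfl | ht
      exacts [hS t List.mem_cons_self, hp.2.1 t ht]

end Reachability

section Potential

variable [AddCommGroup Γ] {γ : E → Γ} {S : Finset E}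

def IsPotential (G : Multigraph V E) (γ : E → Γ) (S : Finset E) (φ : V → Γ) : Prop :=
  ∀ e ∈ S, φ (G.head e) = φ (G.tail e) + γ e

lemma TrivialImage.mono {T : Finset E} (h : G.TrivialImage γ T) (hST : S ⊆ T) :
    G.TrivialImage γ S :=
  fun w hw => h w ⟨hw.1, hw.2.1, fun s hs => hST (hw.2.2.1 s hs), hw.2.2.2⟩

lemma IsPotential.eq_add_rho {φ : V → Γ} (hφ : G.IsPotential γ S φ) {u v : V}
    {w : List (E × Bool)} (h : G.WalkFrom u v w) (hS : ∀ s ∈ w, s.1 ∈ S) :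
    φ v = φ u + rho γ w := by
  induction h with
  | nil => simp [rho]
  | cons s _ ih =>
    obtain ⟨e, b⟩ := s
    have he : e ∈ S := hS _ List.mem_cons_self
    rw [ih fun t ht => hS t (List.mem_cons_of_mem _ ht)]
    cases b <;> simp [rho, stepSrc, stepDst, hφ e he, add_assoc]

lemma rho_eq_of_isPathIn [DecidableEq E] {e : E} (he : e ∉ S)
    (h : G.TrivialImage γ (insert e S)) {p : List (E × Bool)}
    (hp : G.IsPathIn S (G.tail e) (G.head e) p) : rho γ p = γ e := by
  have hcycle := h _ (hp.isCycleIn_append he)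
  simp only [rho, List.map_append, List.sum_append] at hcycle
  simpa [rho, sub_eq_zero, ← sub_eq_add_neg] using hcycle

lemma IsPotential.insert_of_reachableIn [DecidableEq E] {φ : V → Γ}
    (hφ : G.IsPotential γ S φ) {e : E} (he : e ∉ S) (h : G.TrivialImage γ (insert e S))
    (hreach : G.ReachableIn S (G.tail e) (G.head e)) : G.IsPotential γ (insert e S) φ := by
  obtain ⟨p, hp⟩ := hreach.exists_isPathIn
  refine Finset.forall_mem_insert _ _ _ |>.mpr ⟨?_, hφ⟩
  rw [hφ.eq_add_rho hp.1 hp.2.1, rho_eq_of_isPathIn he h hp]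

/-- Shifting `φ` by a constant on everything that reaches the head of `e` keeps it a potential
on `S`, as no edge of `S` leaves that set, and makes it fit `e`, whose tail is not in that set. -/
lemma IsPotential.exists_insert_of_not_reachableIn [DecidableEq E] {φ : V → Γ}
    (hφ : G.IsPotential γ S φ) {e : E} (hreach : ¬ G.ReachableIn S (G.tail e) (G.head e)) :
    ∃ φ', G.IsPotential γ (insert e S) φ' := by
  classical
  let c := φ (G.tail e) + γ e - φ (G.head e)
  refine ⟨fun x => φ x + if G.ReachableIn S x (G.head e) then c else 0,
    Finset.forall_mem_insert _ _ _ |>.mpr ⟨?_, fun f hf => ?_⟩⟩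
  · simp only [if_pos (ReachableIn.refl S _), if_neg hreach, c]
    abel
  · simp only [reachableIn_tail_iff_reachableIn_head hf, hφ f hf]
    abel

lemma TrivialImage.exists_isPotential (h : G.TrivialImage γ S) :
    ∃ φ, G.IsPotential γ S φ := by
  classical
  induction S using Finset.induction_on with
  | empty => exact ⟨0, by simp [IsPotential]⟩
  | insert e S he ih =>
    obtain ⟨φ, hφ⟩ := ih (h.mono (Finset.subset_insert e S))
    by_cases hreach : G.ReachableIn S (G.tail e) (G.head e)
    · exact ⟨φ, hφ.insert_of_reachableIn he h hreach⟩
    · exact hφ.exists_insert_of_not_reachableIn hreach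

end Potential

section Development

variable [DecidableEq E] {γ : E → ZMod 3} (S : Finset E)

lemma verts_lift [DecidableEq V] :
    (G.Development γ).verts (lift S) = G.verts S ×ˢ Finset.univ := by
  ext ⟨v, z⟩
  simp only [verts, lift, Development, Finset.mem_union, Finset.mem_image, Finset.mem_product,
    Finset.mem_univ, and_true, Prod.exists, Prod.mk.injEq]
  constructor
  · rintro (⟨e, _, he, rfl, -⟩ | ⟨e, _, he, rfl, -⟩)
    exacts [Or.inl ⟨e, he, rfl⟩, Or.inr ⟨e, he, rfl⟩]
  · rintro (⟨e, he, rfl⟩ | ⟨e, he, rfl⟩)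
    exacts [Or.inl ⟨e, z, he, rfl, rfl⟩, Or.inr ⟨e, z - γ e, he, rfl, sub_add_cancel z _⟩]

lemma card_lift : (lift S).card = 3 * S.card := by
  rw [lift, Finset.card_product, Finset.card_univ, ZMod.card, mul_comm]

lemma card_verts_lift [DecidableEq V] :
    ((G.Development γ).verts (lift S)).card = 3 * (G.verts S).card := by
  rw [verts_lift, Finset.card_product, Finset.card_univ, ZMod.card, mul_comm]

def liftAlong (G : Multigraph V E) (φ : V → ZMod 3) (S : Finset E) : Finset (E × ZMod 3) :=
  S.image fun e => (e, φ (G.tail e))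

lemma card_liftAlong (φ : V → ZMod 3) : (G.liftAlong φ S).card = S.card :=
  Finset.card_image_of_injective _ fun _ _ h => (Prod.mk.inj h).1

lemma card_verts_liftAlong_le [DecidableEq V] {φ : V → ZMod 3} (hφ : G.IsPotential γ S φ) :
    ((G.Development γ).verts (G.liftAlong φ S)).card ≤ (G.verts S).card := by
  have hsub :
      (G.Development γ).verts (G.liftAlong φ S) ⊆ (G.verts S).image fun v => (v, φ v) := by
    intro x hx
    rcases Finset.mem_union.mp hx with hx | hx <;>
      obtain ⟨_, hq, rfl⟩ := Finset.mem_image.mp hx <;>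
      obtain ⟨e, he, rfl⟩ := Finset.mem_image.mp hq
    · exact Finset.mem_image.mpr
        ⟨G.tail e, Finset.mem_union_left _ (Finset.mem_image_of_mem _ he), rfl⟩
    · exact Finset.mem_image.mpr
        ⟨G.head e, Finset.mem_union_right _ (Finset.mem_image_of_mem _ he),
          by rw [hφ e he]; rfl⟩
  exact (Finset.card_le_card hsub).trans Finset.card_image_le

end Development

end Multigraph

theorem development_sparse_implies_cone_laman_sparse_general
    {V E : Type} [Fintype E] [DecidableEq V]
    (G : Multigraph V E) (γ : E → ZMod 3)
    (hdev : (G.Development γ).Sparse 2 3 Finset.univ) :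
    G.ConeLamanSparse γ := by
  classical
  intro S hS
  have hlift := hdev (Multigraph.lift S) (Finset.subset_univ _) (hS.product Finset.univ_nonempty)
  rw [Multigraph.card_lift, Multigraph.card_verts_lift] at hlift
  refine ⟨fun htriv => ?_, fun _ => by push_cast at hlift; omega⟩
  obtain ⟨φ, hφ⟩ := htriv.exists_isPotential
  have hcopy :=
    hdev (G.liftAlong φ S) (Finset.subset_univ _) (hS.image fun e => (e, φ (G.tail e)))
  rw [Multigraph.card_liftAlong] at hcopy
  have hverts := Multigraph.card_verts_liftAlong_le S hφ
  omega

/-- if the development is Laman-sparse, then `(G, γ)` is cone-Laman-sparse. -/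
theorem development_sparse_implies_cone_laman_sparse
    {V E : Type} [Fintype V] [Fintype E] [DecidableEq V] [DecidableEq E]
    (G : Multigraph V E) (γ : E → ZMod 3)
    (hdev : (G.Development γ).Sparse 2 3 Finset.univ) :
    G.ConeLamanSparse γ :=
  development_sparse_implies_cone_laman_sparse_general G γ hdev
end
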